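/- arXiv:1509.03625 — 2 statements merged into one kernel-verified Lean document; each statement's English description precedes it below -/
import Mathlib

section
/- There exists an absolute constant c > 0 such that for every choice of (deterministic) signals s_1, …, s_{N_T} ∈ ℂ^{N_t} and every sparsity level s: if the restricted isometry constant of the scaled MIMO measurement matrix Ã ∈ ℂ^{N_R N_t × N} satisfies δ_{2s}(Ã) < 1/√2, then N_t ≥ c·s·log(e·N_t²/s). -/
open MeasureTheory ProbabilityTheory Complex
open scoped ENNReal Matrix

noncomputable section

namespace MIMO

/-- Squared ℓ²-norm of a complex vector. -/
def l2normSq {ι : Type*} [Fintype ι] (x : ι → ℂ) : ℝ := ∑ i, ‖x i‖ ^ 2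

/-- ℓ²-norm of a complex vector. -/
def l2norm {ι : Type*} [Fintype ι] (x : ι → ℂ) : ℝ := Real.sqrt (l2normSq x)

/-- ℓ¹-norm of a complex vector. -/
def l1norm {ι : Type*} [Fintype ι] (x : ι → ℂ) : ℝ := ∑ i, ‖x i‖

/-- Hermitian inner product, conjugate-linear in the first argument. -/
def cInner {ι : Type*} [Fintype ι] (x y : ι → ℂ) : ℂ := ∑ i, (starRingEnd ℂ) (x i) * y i

/-- Spectral norm (ℓ² → ℓ² operator norm) of a complex matrix. -/
def specNorm {m n : Type*} [Fintype m] [Fintype n] (A : Matrix m n ℂ) : ℝ :=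
  sSup ((fun x => l2norm (A.mulVec x)) '' {x | l2norm x ≤ 1})

/-- Frobenius norm of a complex matrix. -/
def frobNorm {m n : Type*} [Fintype m] [Fintype n] (A : Matrix m n ℂ) : ℝ :=
  Real.sqrt (∑ i, ∑ j, ‖A i j‖ ^ 2)

/-- The standard complex Gaussian measure on ℂ: real and imaginary parts are
independent real centered Gaussians of variance 1/2. -/
def stdCGaussian : Measure ℂ :=
  Measure.map (⇑Complex.measurableEquivRealProd.symm)
    ((gaussianReal 0 (1/2)).prod (gaussianReal 0 (1/2)))

/-- A mean-zero complex Gaussian measure of variance σ² on ℂ. -/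
def cGaussian (σ : ℝ) : Measure ℂ :=
  Measure.map (fun z : ℂ => (σ : ℂ) * z) stdCGaussian

/-- Complex Gaussian noise (independent entries, variance σ²). -/
def noiseMeasure (ι : Type*) [Fintype ι] (σ : ℝ) : Measure (ι → ℂ) :=
  Measure.pi (fun _ => cGaussian σ)

/-- The Steinhaus (uniform) distribution on the complex unit circle. -/
def steinhaus : Measure ℂ :=
  Measure.map (fun θ : ℝ => Complex.exp (θ * Complex.I))
    ((ENNReal.ofReal (2 * Real.pi))⁻¹ • volume.restrict (Set.Ico (0:ℝ) (2 * Real.pi)))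

/-- A Steinhaus vector: independent entries uniform on the complex unit circle. -/
def steinhausPi (ι : Type*) [Fintype ι] : Measure (ι → ℂ) := Measure.pi (fun _ => steinhaus)

/-- The joint distribution of the NT independent standard complex Gaussian signals in ℂ^{Nt}. -/
def signalMeasure (NT Nt : ℕ) : Measure (Fin NT → Fin Nt → ℂ) :=
  Measure.pi (fun _ => Measure.pi (fun _ => stdCGaussian))

/-- The angle–delay–Doppler parameter grid `[N_T N_R] × [N_t] × [N_t]`. -/
abbrev Grid (NT NR Nt : ℕ) := Fin (NT * NR) × Fin Nt × Fin Nt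

/-- `e^{2πi x}`. -/
def ePhase (x : ℝ) : ℂ := Complex.exp (((2 * Real.pi * x : ℝ) : ℂ) * Complex.I)

/-- The modulated circulant shift `M_f T_τ` applied to a signal:
`(M_f T_τ s)_k = e^{2πi f (k-1)/N_t} s_{k-τ}` (1-based indices; `k.val = k-1`). -/
def modShift (Nt : ℕ) [NeZero Nt] (τ f : ℕ) (s : Fin Nt → ℂ) (k : Fin Nt) : ℂ :=
  ePhase ((f : ℝ) * (k.1 : ℝ) / (Nt : ℝ)) * s (k - Fin.ofNat Nt τ)

/-- The column `A_Θ` of the MIMO measurement matrix, `Θ = (β,τ,f)`;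
its `j`-th length-`N_t` block is
`e^{2πi β (j-1)/N_R} ∑_i e^{2πi β (i-1)/(N_T N_R)} M_f T_τ s_i`. -/
def colA (NT NR Nt : ℕ) [NeZero Nt] (sg : Fin NT → Fin Nt → ℂ)
    (Θ : Grid NT NR Nt) (p : Fin NR × Fin Nt) : ℂ :=
  ePhase (((Θ.1.1 : ℝ) + 1) * (p.1.1 : ℝ) / (NR : ℝ)) *
    ∑ i : Fin NT, ePhase (((Θ.1.1 : ℝ) + 1) * (i.1 : ℝ) / ((NT : ℝ) * (NR : ℝ))) *
      modShift Nt (Θ.2.1.1 + 1) (Θ.2.2.1 + 1) (sg i) p.2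

/-- The column `Ã_Θ = (N_T N_R N_t)^{-1/2} A_Θ` of the scaled measurement matrix. -/
def colAt (NT NR Nt : ℕ) [NeZero Nt] (sg : Fin NT → Fin Nt → ℂ)
    (Θ : Grid NT NR Nt) (p : Fin NR × Fin Nt) : ℂ :=
  ((Real.sqrt ((NT : ℝ) * (NR : ℝ) * (Nt : ℝ)) : ℂ))⁻¹ * colA NT NR Nt sg Θ p

/-- The MIMO measurement matrix `A`. -/
def Amat (NT NR Nt : ℕ) [NeZero Nt] (sg : Fin NT → Fin Nt → ℂ) :
    Matrix (Fin NR × Fin Nt) (Grid NT NR Nt) ℂ := fun p Θ => colA NT NR Nt sg Θ p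

/-- The scaled MIMO measurement matrix `Ã = (N_T N_R N_t)^{-1/2} A`. -/
def Atil (NT NR Nt : ℕ) [NeZero Nt] (sg : Fin NT → Fin Nt → ℂ) :
    Matrix (Fin NR × Fin Nt) (Grid NT NR Nt) ℂ := fun p Θ => colAt NT NR Nt sg Θ p

/-- The Gram matrix `Ã_T^* Ã_T` of the columns of `Ã` indexed by a subset `T`. -/
def gram (NT NR Nt : ℕ) [NeZero Nt] (sg : Fin NT → Fin Nt → ℂ)
    (T : Finset (Grid NT NR Nt)) : Matrix {Θ // Θ ∈ T} {Θ // Θ ∈ T} ℂ :=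
  fun Θ Θ' => cInner (colAt NT NR Nt sg Θ.1) (colAt NT NR Nt sg Θ'.1)

/-- `S_{[β]}`: the elements of `S` whose angle parameter is equivalent to `β`
(equivalent ⟺ difference divisible by `N_R`). -/
def classOf (NT NR Nt : ℕ) (S : Finset (Grid NT NR Nt)) (β : Fin (NT * NR)) :
    Finset (Grid NT NR Nt) :=
  S.filter (fun Θ => ((Θ.1.1 : ℤ) - (β.1 : ℤ)) % (NR : ℤ) = 0)

/-- A support set `S` is `η`-balanced if `|S_{[β]}| ≤ η |S| / N_R` for every angle class. -/
def IsBalanced (NT NR Nt : ℕ) (S : Finset (Grid NT NR Nt)) (η : ℝ) : Prop :=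
  ∀ β : Fin (NT * NR), ((classOf NT NR Nt S β).card : ℝ) ≤ η * (S.card : ℝ) / (NR : ℝ)

/-- The restricted isometry constant `δ_s(A)`: the smallest `δ ≥ 0` such that
`(1-δ)‖x‖₂² ≤ ‖Ax‖₂² ≤ (1+δ)‖x‖₂²` for all `s`-sparse `x`. -/
def ripConst {m n : Type*} [Fintype m] [Fintype n] (s : ℕ) (A : Matrix m n ℂ) : ℝ :=
  sInf {δ : ℝ | 0 ≤ δ ∧ ∀ x : n → ℂ, (Function.support x).ncard ≤ s →
    (1 - δ) * l2normSq x ≤ l2normSq (A.mulVec x) ∧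
      l2normSq (A.mulVec x) ≤ (1 + δ) * l2normSq x}

/-!
The columns of `Ã` with a fixed angle `β` all have `N_R` receive blocks that differ only by the
same unimodular phases, so these `N_t²` columns form, up to an isometry, an `N_t × N_t²` matrix
inheriting the restricted isometry property of `Ã`. It thus suffices to show that a `d × n`
matrix with `δ_{2s} ≤ 3/4` satisfies `s log(e n / s) ≤ 34 d`.

If `n ≤ d` this is `log x ≤ x - 1`. Otherwise the lower RIP bound makes any `2s` columns
independent, so `2s ≤ d`. Embed `[s] × [q]`, `q = ⌊n / s⌋`, into the columns and take a
Gilbert–Varshamov code `S ⊆ [q]^[s]` of minimal distance `> (s - 1) / 2`, so that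
`q^s ≤ |S| 2^s q^{(s-1)/2}`. The images under the matrix of the indicators of the graphs of the
code words lie in the ball of radius `√(2s)` of `ℂ^d ≅ ℝ^{2d}` and are `√(s/8)`-separated, so
comparing volumes gives `|S| ≤ 9^{2d}`. Taking logarithms, `s log q ≤ 32 d + 2 s`.
-/

open Metric Finset

section Norms

variable {ι : Type*} [Fintype ι]

lemma l2normSq_nonneg (x : ι → ℂ) : 0 ≤ l2normSq x :=
  Finset.sum_nonneg fun _ _ => by positivity

lemma l2normSq_pos {x : ι → ℂ} (hx : x ≠ 0) : 0 < l2normSq x := by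
  obtain ⟨i, hi⟩ := Function.ne_iff.1 hx
  exact Finset.sum_pos' (fun _ _ => by positivity) ⟨i, mem_univ i, pow_pos (norm_pos_iff.2 hi) 2⟩

lemma l2normSq_mulVec_le {κ : Type*} [Fintype κ] (A : Matrix κ ι ℂ) (x : ι → ℂ) :
    l2normSq (A *ᵥ x) ≤ (∑ p, ∑ i, ‖A p i‖ ^ 2) * l2normSq x := by
  rw [l2normSq, l2normSq, Finset.sum_mul]
  refine Finset.sum_le_sum fun p _ => ?_
  calc ‖(A *ᵥ x) p‖ ^ 2 ≤ (∑ i, ‖A p i‖ * ‖x i‖) ^ 2 := by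
        gcongr
        exact (norm_sum_le _ _).trans_eq (by simp)
    _ ≤ (∑ i, ‖A p i‖ ^ 2) * ∑ i, ‖x i‖ ^ 2 := Finset.sum_mul_sq_le_sq_mul_sq _ _ _

lemma l2normSq_mul_apply {J K : Type*} [Fintype J] [Fintype K] (u : J → ℂ) (v : K → ℂ) :
    l2normSq (fun p : J × K => u p.1 * v p.2) = l2normSq u * l2normSq v := by
  simp only [l2normSq, norm_mul, mul_pow, Fintype.sum_prod_type, Finset.sum_mul_sum]

end Norms

lemma Fintype.sum_extend_zero {ι ι' R M : Type*} [Fintype ι] [Fintype ι'] [Zero R]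
    [AddCommMonoid M] {e : ι' → ι} (he : Function.Injective e) (y : ι' → R) (F : ι → R → M)
    (hF : ∀ i, F i 0 = 0) : ∑ i, F i (Function.extend e y 0 i) = ∑ k, F (e k) (y k) := by
  refine (Fintype.sum_of_injective e he _ _ (fun i hi => ?_) fun k => ?_).symm
  · rw [Function.extend_apply' _ _ _ (by simpa using hi), Pi.zero_apply, hF]
  · rw [he.extend_apply]

section RIP

variable {κ ι : Type*} [Fintype κ] [Fintype ι]

def IsRIP (s : ℕ) (A : Matrix κ ι ℂ) (δ : ℝ) : Prop :=
  ∀ x : ι → ℂ, (Function.support x).ncard ≤ s →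
    (1 - δ) * l2normSq x ≤ l2normSq (A *ᵥ x) ∧ l2normSq (A *ᵥ x) ≤ (1 + δ) * l2normSq x

lemma exists_isRIP_of_ripConst_lt {s : ℕ} {A : Matrix κ ι ℂ} {b : ℝ} (hb : ripConst s A < b) :
    ∃ δ, δ < b ∧ IsRIP s A δ := by
  set C := ∑ p, ∑ i, ‖A p i‖ ^ 2
  have hC : 0 ≤ C := by positivity
  have hmem : 1 + C ∈ {δ : ℝ | 0 ≤ δ ∧ IsRIP s A δ} := by
    refine ⟨by linarith, fun x _ => ⟨?_, ?_⟩⟩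
    · nlinarith [l2normSq_nonneg x, l2normSq_nonneg (A *ᵥ x)]
    · nlinarith [l2normSq_mulVec_le A x, l2normSq_nonneg x]
  obtain ⟨δ, hδ, hδb⟩ := (csInf_lt_iff ⟨0, fun _ h => h.1⟩ ⟨_, hmem⟩).1 hb
  exact ⟨δ, hδb, hδ.2⟩

lemma IsRIP.submatrix {ι' : Type*} [Fintype ι'] {s : ℕ} {A : Matrix κ ι ℂ} {δ : ℝ}
    (hA : IsRIP s A δ) {e : ι' → ι} (he : Function.Injective e) :
    IsRIP s (A.submatrix id e) δ := by
  intro y hy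
  have hsupp : (Function.support (Function.extend e y 0)).ncard ≤ s := by
    rwa [Function.support_extend_zero he, Set.ncard_image_of_injective _ he]
  have hnorm : l2normSq (Function.extend e y 0) = l2normSq y :=
    Fintype.sum_extend_zero he y (fun _ z => ‖z‖ ^ 2) (by simp)
  have hmul : A *ᵥ Function.extend e y 0 = A.submatrix id e *ᵥ y := by
    ext p
    exact Fintype.sum_extend_zero he y (fun i z => A p i * z) (by simp)
  simpa only [hnorm, hmul] using hA _ hsupp

lemma IsRIP.card_le {s : ℕ} {A : Matrix κ ι ℂ} {δ : ℝ} (hA : IsRIP s A δ) (hδ : δ < 1)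
    (hs : Fintype.card ι ≤ s) : Fintype.card ι ≤ Fintype.card κ := by
  have hinj : Function.Injective A.mulVecLin := by
    rw [← LinearMap.ker_eq_bot, LinearMap.ker_eq_bot']
    intro x hx
    by_contra hx0
    have hsupp : (Function.support x).ncard ≤ s :=
      (Set.ncard_le_card _).trans (by rwa [Nat.card_eq_fintype_card])
    have hlow := (hA x hsupp).1
    rw [Matrix.mulVecLin_apply] at hx
    rw [hx] at hlow
    nlinarith [l2normSq_pos hx0, show l2normSq (0 : κ → ℂ) = 0 by simp [l2normSq]]
  simpa using LinearMap.finrank_le_finrank_of_injective hinj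

lemma IsRIP.of_apply_eq_mul {J K : Type*} [Fintype J] [Fintype K] {s : ℕ}
    {A : Matrix (J × K) ι ℂ} {δ : ℝ} (hA : IsRIP s A δ) {u : J → ℂ} (hu : l2normSq u = 1)
    {R : Matrix K ι ℂ} (h : ∀ j k i, A (j, k) i = u j * R k i) : IsRIP s R δ := by
  have hmul : ∀ x, A *ᵥ x = fun p => u p.1 * (R *ᵥ x) p.2 := by
    intro x
    ext ⟨j, k⟩
    simp only [Matrix.mulVec, dotProduct, h, Finset.mul_sum, mul_assoc]
  intro x hx
  simpa only [hmul, l2normSq_mul_apply, hu, one_mul] using hA x hx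

end RIP

section FixedAngle

variable {NT NR Nt : ℕ} [NeZero NR] [NeZero Nt]

lemma norm_ePhase (x : ℝ) : ‖ePhase x‖ = 1 :=
  Complex.norm_exp_ofReal_mul_I _

lemma colAt_apply_eq_ePhase_mul (sg : Fin NT → Fin Nt → ℂ) (Θ : Grid NT NR Nt) (j : Fin NR)
    (k : Fin Nt) : colAt NT NR Nt sg Θ (j, k) =
      ePhase (((Θ.1.1 : ℝ) + 1) * (j.1 : ℝ) / (NR : ℝ)) * colAt NT NR Nt sg Θ (0, k) := by
  simp only [colAt, colA, Fin.val_zero, CharP.cast_eq_zero, mul_zero, zero_div, ePhase,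
    Complex.ofReal_zero, zero_mul, Complex.exp_zero, one_mul]
  ring

lemma isRIP_fixedAngle [NeZero NT] (sg : Fin NT → Fin Nt → ℂ) {s : ℕ} {δ : ℝ}
    (hA : IsRIP s (Atil NT NR Nt sg) δ) :
    IsRIP s (fun k p => (Real.sqrt NR : ℂ) * colAt NT NR Nt sg (0, p) (0, k)) δ := by
  have hNR : (0 : ℝ) < NR := by exact_mod_cast Nat.pos_of_neZero NR
  have hsqrt : (Real.sqrt NR : ℂ) ≠ 0 := by exact_mod_cast (Real.sqrt_pos.2 hNR).ne'
  have hu : l2normSq (fun j : Fin NR => ePhase (j.1 / NR) / Real.sqrt NR) = 1 := by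
    simp only [l2normSq, norm_div, norm_ePhase, Complex.norm_real, Real.norm_eq_abs,
      abs_of_nonneg (Real.sqrt_nonneg _), div_pow, one_pow, Real.sq_sqrt hNR.le, sum_const,
      card_univ, Fintype.card_fin, nsmul_eq_mul]
    field_simp
  have : NeZero (NT * NR) := ⟨mul_ne_zero (NeZero.ne NT) (NeZero.ne NR)⟩
  refine (hA.submatrix (e := fun p => (0, p)) fun p q h => (Prod.ext_iff.1 h).2).of_apply_eq_mul
    hu fun j k p => ?_
  change colAt NT NR Nt sg (0, p) (j, k) = _
  rw [colAt_apply_eq_ePhase_mul, Fin.val_zero, Nat.cast_zero, zero_add, one_mul]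
  field_simp

end FixedAngle

lemma exists_pairwise_not_rel_card_le {X : Type*} [Fintype X] (R : X → X → Prop)
    [DecidableRel R] (hsymm : ∀ x y, R x y → R y x) (hrefl : ∀ x, R x x) {V : ℕ}
    (hV : ∀ x, #{y | R x y} ≤ V) :
    ∃ S : Finset X, (S : Set X).Pairwise (fun x y => ¬ R x y) ∧ Fintype.card X ≤ #S * V := by
  classical
  set F := (univ : Finset (Finset X)).filter fun S : Finset X =>
    (S : Set X).Pairwise fun x y => ¬ R x y
  obtain ⟨S, hSF, hSmax⟩ := F.exists_max_image card ⟨∅, by simp [F]⟩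
  have hS : (S : Set X).Pairwise fun x y => ¬ R x y := (mem_filter.1 hSF).2
  refine ⟨S, hS, ?_⟩
  -- a maximal separated set is a net: every point is related to one of its points
  have hcover : univ ⊆ S.biUnion fun y => {x | R y x} := by
    intro x _
    by_contra hx
    simp only [mem_biUnion, mem_filter, mem_univ, true_and, not_exists, not_and] at hx
    have hxS : x ∉ S := fun h => hx x h (hrefl x)
    have hins : insert x S ∈ F := by
      refine mem_filter.2 ⟨mem_univ _, ?_⟩
      rw [coe_insert, Set.pairwise_insert]
      exact ⟨hS, fun y hy _ => ⟨fun h => hx y hy (hsymm _ _ h), hx y hy⟩⟩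
    have := hSmax _ hins
    rw [card_insert_of_notMem hxS] at this
    omega
  calc Fintype.card X = #(univ : Finset X) := card_univ.symm
    _ ≤ #(S.biUnion fun y => {x | R y x}) := card_le_card hcover
    _ ≤ #S * V := card_biUnion_le_card_mul _ _ _ fun y _ => hV y

section Hamming

variable {ι α : Type*} [Fintype ι] [DecidableEq ι] [Fintype α] [DecidableEq α]

lemma card_hammingBall_le [Nonempty α] (f : ι → α) (t : ℕ) :
    #{g | hammingDist f g ≤ t} ≤ 2 ^ Fintype.card ι * Fintype.card α ^ t := by
  set P := (univ : Finset (Finset ι)).filter fun D => #D ≤ t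
  have hcover : ({g | hammingDist f g ≤ t} : Finset (ι → α)) ⊆
      P.biUnion fun D => Fintype.piFinset fun i => if i ∈ D then univ else {f i} := by
    intro g hg
    refine mem_biUnion.2
      ⟨({i | f i ≠ g i} : Finset ι), mem_filter.2 ⟨mem_univ _, (mem_filter.1 hg).2⟩, ?_⟩
    simp only [Fintype.mem_piFinset]
    intro i
    split_ifs with h
    · exact mem_univ _
    · simp only [mem_filter, mem_univ, true_and, not_not] at h
      exact mem_singleton.2 h.symm
  have hfiber : ∀ D ∈ P, #(Fintype.piFinset fun i => if i ∈ D then univ else {f i}) ≤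
      Fintype.card α ^ t := by
    intro D hD
    rw [Fintype.card_piFinset]
    simp only [apply_ite card, card_univ, card_singleton, prod_ite_mem, univ_inter, prod_const]
    exact Nat.pow_le_pow_right Fintype.card_pos (mem_filter.1 hD).2
  calc #{g | hammingDist f g ≤ t} ≤ #P * Fintype.card α ^ t :=
        (card_le_card hcover).trans (card_biUnion_le_card_mul _ _ _ hfiber)
    _ ≤ 2 ^ Fintype.card ι * Fintype.card α ^ t := by
        gcongr
        exact (card_filter_le _ _).trans (by simp)

/-- Gilbert–Varshamov bound. -/
lemma exists_code [Nonempty α] (t : ℕ) : ∃ S : Finset (ι → α),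
    (S : Set (ι → α)).Pairwise (fun f g => t < hammingDist f g) ∧
      Fintype.card α ^ Fintype.card ι ≤ #S * (2 ^ Fintype.card ι * Fintype.card α ^ t) := by
  obtain ⟨S, hS, hcard⟩ := exists_pairwise_not_rel_card_le (fun f g : ι → α => hammingDist f g ≤ t)
    (fun f g h => (hammingDist_comm g f).trans_le h) (fun f => by simp) (card_hammingBall_le · t)
  refine ⟨S, hS.mono' fun f g h => not_le.1 h, ?_⟩
  simpa using hcard

end Hamming

lemma card_mul_pow_le_of_pairwise_le_norm_sub {E κ : Type*} [NormedAddCommGroup E]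
    [NormedSpace ℝ E] [FiniteDimensional ℝ E] [Fintype κ] (Y : κ → E) {R r : ℝ} (hR : 0 ≤ R)
    (hr : 0 < r) (hY : ∀ i, ‖Y i‖ ≤ R) (hsep : Pairwise fun i j => r ≤ ‖Y i - Y j‖) :
    Fintype.card κ * (r / 2) ^ Module.finrank ℝ E ≤ (R + r / 2) ^ Module.finrank ℝ E := by
  let : MeasurableSpace E := borel E
  have : BorelSpace E := ⟨rfl⟩
  set μ : Measure E := Measure.addHaar
  have hdisj : Pairwise (Function.onFun Disjoint fun i => ball (Y i) (r / 2)) := fun i j hij =>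
    ball_disjoint_ball (by rw [dist_eq_norm]; linarith [hsep hij])
  have hsub : (⋃ i, ball (Y i) (r / 2)) ⊆ ball 0 (R + r / 2) := by
    refine Set.iUnion_subset fun i z hz => mem_ball_zero_iff.2 ?_
    have := mem_ball_iff_norm.1 hz
    linarith [norm_le_norm_sub_add z (Y i), hY i]
  have hvol : ∀ (x : E) {ρ : ℝ}, 0 < ρ →
      μ (ball x ρ) = ENNReal.ofReal (ρ ^ Module.finrank ℝ E) * μ (ball 0 1) :=
    fun x _ hρ => Measure.addHaar_ball_of_pos μ x hρ
  have hmeas : Fintype.card κ * ENNReal.ofReal ((r / 2) ^ Module.finrank ℝ E) * μ (ball 0 1) ≤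
      ENNReal.ofReal ((R + r / 2) ^ Module.finrank ℝ E) * μ (ball 0 1) := by
    calc _ = ∑ i, μ (ball (Y i) (r / 2)) := by
          simp only [hvol _ (half_pos hr), sum_const, card_univ, nsmul_eq_mul, mul_assoc]
      _ = μ (⋃ i, ball (Y i) (r / 2)) :=
          (measure_iUnion hdisj fun _ => measurableSet_ball).trans (tsum_fintype _) |>.symm
      _ ≤ μ (ball 0 (R + r / 2)) := measure_mono hsub
      _ = _ := hvol 0 (by positivity)
  rw [ENNReal.mul_le_mul_iff_left (measure_ball_pos μ _ one_pos).ne' measure_ball_lt_top.ne,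
    ← ENNReal.ofReal_natCast, ← ENNReal.ofReal_mul (by positivity)] at hmeas
  exact (ENNReal.ofReal_le_ofReal_iff (by positivity)).1 hmeas

section Code

variable {ι α : Type*} [Fintype ι] [DecidableEq α]

def graphIndicator (f : ι → α) : ι × α → ℂ := fun p => if f p.1 = p.2 then 1 else 0

lemma ncard_support_graphIndicator (f : ι → α) :
    (Function.support (graphIndicator f)).ncard = Fintype.card ι := by
  have : Function.support (graphIndicator f) = Set.range fun i => (i, f i) := by
    ext ⟨i, a⟩
    simp [graphIndicator, eq_comm]
  rw [this, Set.ncard_range_of_injective fun i j h => (Prod.ext_iff.1 h).1,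
    Nat.card_eq_fintype_card]

variable [Fintype α]

lemma l2normSq_graphIndicator (f : ι → α) : l2normSq (graphIndicator f) = Fintype.card ι := by
  rw [l2normSq, Fintype.sum_prod_type]
  simp [graphIndicator, apply_ite]

lemma hammingDist_le_l2normSq_graphIndicator_sub (f g : ι → α) :
    (hammingDist f g : ℝ) ≤ l2normSq (graphIndicator f - graphIndicator g) := by
  rw [l2normSq, Fintype.sum_prod_type]
  calc (hammingDist f g : ℝ) = ∑ i, ‖(graphIndicator f - graphIndicator g) (i, f i)‖ ^ 2 := by
        simp [hammingDist, graphIndicator, apply_ite, eq_comm, natCast_card_filter]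
    _ ≤ _ := sum_le_sum fun i _ =>
        single_le_sum (f := fun a => ‖(graphIndicator f - graphIndicator g) (i, a)‖ ^ 2)
          (fun a _ => by positivity) (mem_univ (f i))

end Code

lemma card_le_pow_of_isRIP {ι α κ : Type*} [Fintype ι] [Nonempty ι] [Fintype α] [DecidableEq α]
    [Fintype κ] {M : Matrix κ (ι × α) ℂ} {δ : ℝ} (hM : IsRIP (2 * Fintype.card ι) M δ)
    (hδ : δ ≤ 3 / 4) {S : Finset (ι → α)}
    (hS : (S : Set (ι → α)).Pairwise fun f g => Fintype.card ι ≤ 2 * hammingDist f g) :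
    #S ≤ 9 ^ (2 * Fintype.card κ) := by
  set s := Fintype.card ι
  have hs : (0 : ℝ) < s := by exact_mod_cast Fintype.card_pos
  set r := Real.sqrt (s / 8)
  have hr : 0 < r := Real.sqrt_pos.2 (by positivity)
  have hr2 : r ^ 2 = s / 8 := Real.sq_sqrt (by positivity)
  let Y : S → EuclideanSpace ℂ κ := fun f => WithLp.toLp 2 (M *ᵥ graphIndicator f.1)
  have hY : ∀ f, ‖Y f‖ ≤ 4 * r := by
    intro f
    have hup := (hM (graphIndicator f.1) (by rw [ncard_support_graphIndicator]; omega)).2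
    rw [l2normSq_graphIndicator] at hup
    refine (sq_le_sq₀ (norm_nonneg _) (by positivity)).1 ?_
    rw [EuclideanSpace.norm_sq_eq]
    change l2normSq _ ≤ _
    nlinarith
  have hsep : Pairwise fun f g => r ≤ ‖Y f - Y g‖ := by
    intro f g hfg
    have hsupp : (Function.support (graphIndicator f.1 - graphIndicator g.1)).ncard ≤ 2 * s := by
      refine (Set.ncard_le_ncard (Function.support_sub _ _) (Set.toFinite _)).trans ?_
      refine (Set.ncard_union_le _ _).trans ?_
      rw [ncard_support_graphIndicator, ncard_support_graphIndicator]
      omega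
    have hlow := (hM _ hsupp).1
    have hdist : (s : ℝ) ≤ 2 * hammingDist f.1 g.1 := by
      exact_mod_cast hS f.2 g.2 (Subtype.coe_ne_coe.2 hfg)
    have := hammingDist_le_l2normSq_graphIndicator_sub f.1 g.1
    refine (sq_le_sq₀ hr.le (norm_nonneg _)).1 ?_
    rw [← WithLp.toLp_sub, EuclideanSpace.norm_sq_eq, ← Matrix.mulVec_sub]
    change _ ≤ l2normSq _
    nlinarith
  have hpack := card_mul_pow_le_of_pairwise_le_norm_sub Y (by positivity) hr hY hsep
  rw [finrank_real_of_complex, finrank_euclideanSpace, Fintype.card_coe,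
    show 4 * r + r / 2 = 9 * (r / 2) by ring, mul_pow] at hpack
  exact_mod_cast le_of_mul_le_mul_right hpack (by positivity)

lemma mul_log_exp_mul_div_le {x y : ℝ} (hx : 0 ≤ x) (hy : 0 ≤ y) :
    x * Real.log (Real.exp 1 * y / x) ≤ y := by
  rcases hx.eq_or_lt with rfl | hx
  · simpa using hy
  rcases hy.eq_or_lt with rfl | hy
  · simp
  have := Real.log_le_sub_one_of_pos (div_pos hy hx)
  rw [mul_div_assoc, Real.log_mul (Real.exp_pos 1).ne' (div_pos hy hx).ne', Real.log_exp]
  calc x * (1 + Real.log (y / x)) ≤ x * (y / x) := by gcongr; linarith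
    _ = y := by field_simp

lemma log_exp_mul_div_le {n s : ℕ} (hs : 0 < s) (hsn : s ≤ n) :
    Real.log (Real.exp 1 * n / s) ≤ 1 + Real.log 2 + Real.log (n / s : ℕ) := by
  have hq : (1 : ℝ) ≤ (n / s : ℕ) := by exact_mod_cast (Nat.le_div_iff_mul_le hs).2 (by omega)
  have hlt : (n : ℝ) / s < (n / s : ℕ) + 1 := by
    simpa only [Nat.floor_div_eq_div] using Nat.lt_floor_add_one ((n : ℝ) / s)
  have hpos : (0 : ℝ) < n / s := div_pos (by exact_mod_cast hs.trans_le hsn) (by exact_mod_cast hs)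
  rw [mul_div_assoc, Real.log_mul (Real.exp_pos 1).ne' hpos.ne', Real.log_exp, add_assoc,
    ← Real.log_mul two_ne_zero (by positivity)]
  gcongr
  linarith

lemma mul_log_card_le_of_isRIP {ι α κ : Type*} [Fintype ι] [DecidableEq ι] [Nonempty ι]
    [Fintype α] [DecidableEq α] [Nonempty α] [Fintype κ] {M : Matrix κ (ι × α) ℂ} {δ : ℝ}
    (hM : IsRIP (2 * Fintype.card ι) M δ) (hδ : δ ≤ 3 / 4) :
    Fintype.card ι * Real.log (Fintype.card α) ≤
      4 * Fintype.card κ * Real.log 9 + 2 * Fintype.card ι * Real.log 2 := by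
  set s := Fintype.card ι
  set q := Fintype.card α
  set t := (s - 1) / 2
  obtain ⟨S, hS, hcode⟩ := exists_code (ι := ι) (α := α) t
  have hS9 := card_le_pow_of_isRIP hM hδ (hS.mono' fun f g h => by omega)
  have hq : (0 : ℝ) < q := by exact_mod_cast Fintype.card_pos
  have hpow : (q : ℝ) ^ s ≤ 9 ^ (2 * Fintype.card κ) * (2 ^ s * q ^ t) := by
    exact_mod_cast hcode.trans (Nat.mul_le_mul_right _ hS9)
  have hlog := Real.log_le_log (by positivity) hpow
  rw [Real.log_pow, Real.log_mul (by positivity) (by positivity),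
    Real.log_mul (by positivity) (by positivity), Real.log_pow, Real.log_pow, Real.log_pow] at hlog
  have ht : (t : ℝ) ≤ s / 2 := by
    rw [le_div_iff₀ two_pos]
    exact_mod_cast (by omega : t * 2 ≤ s)
  have hlogq : 0 ≤ Real.log q := Real.log_nonneg (by exact_mod_cast Fintype.card_pos)
  push_cast at hlog
  nlinarith

lemma mul_log_le_of_isRIP {κ ι : Type*} [Fintype κ] [Fintype ι] {M : Matrix κ ι ℂ} {s : ℕ}
    {δ : ℝ} (hM : IsRIP (2 * s) M δ) (hδ : δ ≤ 3 / 4) :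
    s * Real.log (Real.exp 1 * Fintype.card ι / s) ≤ 34 * Fintype.card κ := by
  set n := Fintype.card ι
  set d := Fintype.card κ
  by_cases hnd : n ≤ d
  · calc _ ≤ (n : ℝ) := mul_log_exp_mul_div_le (by positivity) (by positivity)
      _ ≤ 34 * d := by norm_cast; omega
  rcases Nat.eq_zero_or_pos s with rfl | hs
  · simp
  -- the lower RIP bound makes any `min (2 s) n` columns linearly independent
  have h2s : 2 * s ≤ d := by
    have := (hM.submatrix ((Fintype.equivFin ι).symm.injective.comp
      (Fin.castLE_injective (min_le_right (2 * s) n)))).card_le (by linarith) (by simp)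
    simp only [Fintype.card_fin] at this
    omega
  set q := n / s
  have hq : 0 < q := Nat.div_pos (by omega) hs
  obtain ⟨e⟩ : Nonempty (Fin s × Fin q ↪ ι) :=
    Function.Embedding.nonempty_of_card_le (by simpa using Nat.mul_div_le n s)
  have : Nonempty (Fin s) := ⟨⟨0, hs⟩⟩
  have : Nonempty (Fin q) := ⟨⟨0, hq⟩⟩
  have hcode := mul_log_card_le_of_isRIP (κ := κ) (M := M.submatrix id e) (δ := δ)
    (by simpa using hM.submatrix e.injective) hδ
  simp only [Fintype.card_fin] at hcode
  have hlog2 : Real.log 2 ≤ 1 := by linarith [Real.log_le_sub_one_of_pos two_pos]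
  have hlog9 : Real.log 9 ≤ 8 := by
    linarith [Real.log_le_sub_one_of_pos (by norm_num : (0 : ℝ) < 9)]
  have hsd : (2 * s : ℝ) ≤ d := by exact_mod_cast h2s
  calc s * Real.log (Real.exp 1 * n / s) ≤ s * (1 + Real.log 2 + Real.log q) := by
        gcongr
        exact log_exp_mul_div_le hs (by omega)
    _ ≤ 2 * s + s * Real.log q := by nlinarith
    _ ≤ 2 * s + (4 * d * Real.log 9 + 2 * s * Real.log 2) := by linarith
    _ ≤ 34 * d := by nlinarith

/-- lower bound on `N_t` forced by the RIP (instance optimality). -/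
theorem stmt1 : ∃ c : ℝ, 0 < c ∧
    ∀ (NT NR Nt : ℕ) [NeZero NT] [NeZero NR] [NeZero Nt]
      (sg : Fin NT → Fin Nt → ℂ) (s : ℕ),
      ripConst (2 * s) (Atil NT NR Nt sg) < 1 / Real.sqrt 2 →
      c * (s : ℝ) * Real.log (Real.exp 1 * (Nt : ℝ) ^ 2 / (s : ℝ)) ≤ (Nt : ℝ) := by
  refine ⟨1 / 34, by norm_num, fun NT NR Nt _ _ _ sg s hrip => ?_⟩
  obtain ⟨δ, hδ, hA⟩ := exists_isRIP_of_ripConst_lt hrip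
  have hδ' : δ ≤ 3 / 4 := by
    have : (4 / 3 : ℝ) ≤ Real.sqrt 2 := Real.le_sqrt_of_sq_le (by norm_num)
    refine hδ.le.trans ?_
    rw [div_le_iff₀ (by positivity)]
    linarith
  have hbound := mul_log_le_of_isRIP (isRIP_fixedAngle sg hA) hδ'
  simp only [Fintype.card_prod, Fintype.card_fin, ← sq, Nat.cast_pow] at hbound
  linarith

end MIMO
end
end

section
/- For arbitrary signals s_1, …, s_{N_T} ∈ ℂ^{N_t} and any two grid points Θ = (β,τ,f), Θ' = (β',τ',f') ∈ G whose angle parameters lie in different angle classes (i.e., β'−β is not a multiple of N_R), the corresponding columns of the MIMO measurement matrix are orthogonal: ⟨A_Θ, A_{Θ'}⟩ = 0. More precisely, ⟨A_Θ, A_{Θ'}⟩ = δ^{~N_R}_{β,β'}·N_R·⟨Σ_{i=1}^{N_T} e^{2πi β(i−1)/(N_T N_R)} M_f T_τ s_i, Σ_{i=1}^{N_T} e^{2πi β'(i−1)/(N_T N_R)} M_{f'} T_{τ'} s_i⟩, where δ^{~N_R}_{β,β'} = 1 if N_R divides β'−β and 0 otherwise. -/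
open MeasureTheory ProbabilityTheory Complex
open scoped ENNReal Matrix

noncomputable section

namespace MIMO

/-
Proof idea: the column `A_Θ` is the outer product of the steering vector
`j ↦ e^{2πi β j/N_R}` over the receive antennas with the per-block signal, so
`⟨A_Θ, A_Θ'⟩` factors as the inner product of the two steering vectors times that of the
two per-block signals. The steering factor is the character sum `∑_{j<N_R} ω^{(β'-β) j}`
with `ω = e^{2πi/N_R}` a primitive `N_R`-th root of unity, which is `N_R` when
`N_R ∣ β'-β` and `0` otherwise.
-/

theorem cInner_prod_mul {ι κ : Type*} [Fintype ι] [Fintype κ] (u u' : ι → ℂ) (v v' : κ → ℂ) :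
    cInner (fun p : ι × κ => u p.1 * v p.2) (fun p => u' p.1 * v' p.2) =
      cInner u u' * cInner v v' := by
  simp only [cInner, Fintype.sum_prod_type, Finset.sum_mul_sum, map_mul]
  exact Finset.sum_congr rfl fun _ _ => Finset.sum_congr rfl fun _ _ => by ring

theorem ePhase_add (x y : ℝ) : ePhase (x + y) = ePhase x * ePhase y := by
  simp only [ePhase, ← Complex.exp_add]
  push_cast
  ring_nf

theorem conj_ePhase (x : ℝ) : starRingEnd ℂ (ePhase x) = ePhase (-x) := by
  simp only [ePhase, ← Complex.exp_conj, map_mul, Complex.conj_ofReal, Complex.conj_I]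
  push_cast
  ring_nf

theorem ePhase_natCast_mul (n : ℕ) (x : ℝ) : ePhase (n * x) = ePhase x ^ n := by
  simp only [ePhase, ← Complex.exp_nat_mul]
  push_cast
  ring_nf

theorem ePhase_intCast_div_eq_one_iff {n : ℕ} (hn : n ≠ 0) (m : ℤ) :
    ePhase (m / n) = 1 ↔ (n : ℤ) ∣ m := by
  have hω : ePhase (m / n) = Complex.exp (2 * Real.pi * Complex.I / n) ^ m := by
    rw [ePhase, ← Complex.exp_int_mul]
    push_cast
    ring_nf
  rw [hω, (Complex.isPrimitiveRoot_exp n hn).zpow_eq_one_iff_dvd]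

theorem sum_ePhase_intCast_mul_div (n : ℕ) (m : ℤ) :
    ∑ j : Fin n, ePhase (m * j / n) = if (n : ℤ) ∣ m then (n : ℂ) else 0 := by
  obtain rfl | hn := eq_or_ne n 0
  · simp
  set ζ := ePhase (m / n)
  have hpow : ∀ j : ℕ, ePhase (m * j / n) = ζ ^ j := fun j => by
    rw [← ePhase_natCast_mul]
    ring_nf
  simp only [hpow, Fin.sum_univ_eq_sum_range (ζ ^ ·)]
  have hζ : ζ = 1 ↔ (n : ℤ) ∣ m := ePhase_intCast_div_eq_one_iff hn m
  split_ifs with hdvd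
  · simp [hζ.mpr hdvd]
  · have hζn : ζ ^ n = 1 := by
      rw [← ePhase_natCast_mul, mul_div_cancel₀ _ (Nat.cast_ne_zero.mpr hn)]
      simpa using (ePhase_intCast_div_eq_one_iff one_ne_zero m).mpr (by simp)
    rw [geom_sum_eq (mt hζ.mp hdvd), hζn, sub_self, zero_div]

def steering (n : ℕ) (b : ℝ) (j : Fin n) : ℂ := ePhase (b * j / n)

theorem cInner_steering (n : ℕ) (a b : ℝ) (m : ℤ) (hm : b - a = m) :
    cInner (steering n a) (steering n b) = if (n : ℤ) ∣ m then (n : ℂ) else 0 := by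
  rw [← sum_ePhase_intCast_mul_div]
  refine Finset.sum_congr rfl fun j _ => ?_
  rw [steering, steering, conj_ePhase, ← ePhase_add, ← hm]
  ring_nf

def blockSignal (NT NR Nt : ℕ) [NeZero Nt] (sg : Fin NT → Fin Nt → ℂ) (Θ : Grid NT NR Nt)
    (k : Fin Nt) : ℂ :=
  ∑ i : Fin NT, ePhase (((Θ.1.1 : ℝ) + 1) * (i.1 : ℝ) / ((NT : ℝ) * (NR : ℝ))) *
    modShift Nt (Θ.2.1.1 + 1) (Θ.2.2.1 + 1) (sg i) k

theorem colA_eq_steering_mul_blockSignal (NT NR Nt : ℕ) [NeZero Nt]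
    (sg : Fin NT → Fin Nt → ℂ) (Θ : Grid NT NR Nt) :
    colA NT NR Nt sg Θ = fun p => steering NR (Θ.1.1 + 1) p.1 * blockSignal NT NR Nt sg Θ p.2 :=
  rfl

theorem stmt18_general (NT NR Nt : ℕ) [NeZero Nt]
    (sg : Fin NT → Fin Nt → ℂ) (Θ Θ' : Grid NT NR Nt) :
    (cInner (colA NT NR Nt sg Θ) (colA NT NR Nt sg Θ') =
      (if ((Θ'.1.1 : ℤ) - (Θ.1.1 : ℤ)) % (NR : ℤ) = 0 then 1 else 0) * (NR : ℂ) *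
        cInner
          (fun k => ∑ i : Fin NT,
            ePhase (((Θ.1.1 : ℝ) + 1) * (i.1 : ℝ) / ((NT : ℝ) * (NR : ℝ))) *
              modShift Nt (Θ.2.1.1 + 1) (Θ.2.2.1 + 1) (sg i) k)
          (fun k => ∑ i : Fin NT,
            ePhase (((Θ'.1.1 : ℝ) + 1) * (i.1 : ℝ) / ((NT : ℝ) * (NR : ℝ))) *
              modShift Nt (Θ'.2.1.1 + 1) (Θ'.2.2.1 + 1) (sg i) k)) ∧
    (¬ ((Θ'.1.1 : ℤ) - (Θ.1.1 : ℤ)) % (NR : ℤ) = 0 →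
      cInner (colA NT NR Nt sg Θ) (colA NT NR Nt sg Θ') = 0) := by
  refine (fun hformula => ⟨hformula, fun hne => by rw [hformula, if_neg hne, zero_mul, zero_mul]⟩) ?_
  rw [colA_eq_steering_mul_blockSignal, colA_eq_steering_mul_blockSignal, cInner_prod_mul,
    cInner_steering NR _ _ ((Θ'.1.1 : ℤ) - Θ.1.1) (by push_cast; ring)]
  simp only [← Int.dvd_iff_emod_eq_zero]
  split_ifs
  · rw [one_mul]
    rfl
  · simp only [zero_mul]

/-- columns from different angle classes are orthogonal; explicit
inner-product formula (equation (1.20) of the paper). -/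
theorem stmt18 (NT NR Nt : ℕ) [NeZero NT] [NeZero NR] [NeZero Nt]
    (sg : Fin NT → Fin Nt → ℂ) (Θ Θ' : Grid NT NR Nt) :
    (cInner (colA NT NR Nt sg Θ) (colA NT NR Nt sg Θ') =
      (if ((Θ'.1.1 : ℤ) - (Θ.1.1 : ℤ)) % (NR : ℤ) = 0 then 1 else 0) * (NR : ℂ) *
        cInner
          (fun k => ∑ i : Fin NT,
            ePhase (((Θ.1.1 : ℝ) + 1) * (i.1 : ℝ) / ((NT : ℝ) * (NR : ℝ))) *
              modShift Nt (Θ.2.1.1 + 1) (Θ.2.2.1 + 1) (sg i) k)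
          (fun k => ∑ i : Fin NT,
            ePhase (((Θ'.1.1 : ℝ) + 1) * (i.1 : ℝ) / ((NT : ℝ) * (NR : ℝ))) *
              modShift Nt (Θ'.2.1.1 + 1) (Θ'.2.2.1 + 1) (sg i) k)) ∧
    (¬ ((Θ'.1.1 : ℤ) - (Θ.1.1 : ℤ)) % (NR : ℤ) = 0 →
      cInner (colA NT NR Nt sg Θ) (colA NT NR Nt sg Θ') = 0) :=
  stmt18_general NT NR Nt sg Θ Θ'

end MIMO
end
end
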